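/- Let X and Y be radical objects of C₂(P). A morphism f ∈ Hom_{C₂(P)}(X, Y) is an isomorphism in C₂(P) if and only if it is a homotopy equivalence, i.e. its homotopy class is an isomorphism in K₂(P). -/

import Mathlib

open CategoryTheory

universe u

noncomputable section

variable (R : Type u) [Ring R]

structure TwoCx : Type (u + 1) where
  X1 : ModuleCat.{u} R
  X0 : ModuleCat.{u} R
  fin1 : Module.Finite R X1
  proj1 : Module.Projective R X1
  fin0 : Module.Finite R X0
  proj0 : Module.Projective R X0
  d1 : X1 ⟶ X0
  d0 : X0 ⟶ X1
  dd1 : d1 ≫ d0 = 0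
  dd0 : d0 ≫ d1 = 0

variable {R}

@[ext]
structure TwoHom (X Y : TwoCx R) : Type u where
  f1 : X.X1 ⟶ Y.X1
  f0 : X.X0 ⟶ Y.X0
  comm1 : X.d1 ≫ f0 = f1 ≫ Y.d1
  comm0 : X.d0 ≫ f1 = f0 ≫ Y.d0

instance : CategoryStruct (TwoCx R) where
  Hom := TwoHom
  id X := ⟨𝟙 X.X1, 𝟙 X.X0, by simp, by simp⟩
  comp {X Y Z} f g :=
    ⟨f.f1 ≫ g.f1, f.f0 ≫ g.f0, by
      rw [← Category.assoc, f.comm1, Category.assoc, g.comm1, ← Category.assoc], by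
      rw [← Category.assoc, f.comm0, Category.assoc, g.comm0, ← Category.assoc]⟩

@[simp] theorem id_f1 (X : TwoCx R) : TwoHom.f1 (𝟙 X) = 𝟙 X.X1 := rfl
@[simp] theorem id_f0 (X : TwoCx R) : TwoHom.f0 (𝟙 X) = 𝟙 X.X0 := rfl
@[simp] theorem comp_f1 {X Y Z : TwoCx R} (f : X ⟶ Y) (g : Y ⟶ Z) :
    TwoHom.f1 (f ≫ g) = TwoHom.f1 f ≫ TwoHom.f1 g := rfl
@[simp] theorem comp_f0 {X Y Z : TwoCx R} (f : X ⟶ Y) (g : Y ⟶ Z) :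
    TwoHom.f0 (f ≫ g) = TwoHom.f0 f ≫ TwoHom.f0 g := rfl

@[ext] theorem hom_ext {X Y : TwoCx R} {f g : X ⟶ Y}
    (h1 : TwoHom.f1 f = TwoHom.f1 g) (h0 : TwoHom.f0 f = TwoHom.f0 g) : f = g :=
  TwoHom.ext h1 h0

instance : Category (TwoCx R) where
  id_comp f := by ext <;> simp
  comp_id f := by ext <;> simp
  assoc f g h := by ext <;> simp

section HomGroup

variable {X Y : TwoCx R}

instance : Zero (X ⟶ Y) :=
  ⟨TwoHom.mk 0 0 (by simp) (by simp)⟩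

@[simp] theorem zero_f1 : TwoHom.f1 (0 : X ⟶ Y) = 0 := rfl
@[simp] theorem zero_f0 : TwoHom.f0 (0 : X ⟶ Y) = 0 := rfl

instance : Add (X ⟶ Y) :=
  ⟨fun f g => TwoHom.mk (f.f1 + g.f1) (f.f0 + g.f0)
    (by rw [Preadditive.comp_add, f.comm1, g.comm1, ← Preadditive.add_comp])
    (by rw [Preadditive.comp_add, f.comm0, g.comm0, ← Preadditive.add_comp])⟩

@[simp] theorem add_f1 (f g : X ⟶ Y) :
    TwoHom.f1 (f + g) = TwoHom.f1 f + TwoHom.f1 g := rfl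
@[simp] theorem add_f0 (f g : X ⟶ Y) :
    TwoHom.f0 (f + g) = TwoHom.f0 f + TwoHom.f0 g := rfl

instance : Neg (X ⟶ Y) :=
  ⟨fun f => TwoHom.mk (-f.f1) (-f.f0)
    (by rw [Preadditive.comp_neg, f.comm1, ← Preadditive.neg_comp])
    (by rw [Preadditive.comp_neg, f.comm0, ← Preadditive.neg_comp])⟩

@[simp] theorem neg_f1 (f : X ⟶ Y) : TwoHom.f1 (-f) = -TwoHom.f1 f := rfl
@[simp] theorem neg_f0 (f : X ⟶ Y) : TwoHom.f0 (-f) = -TwoHom.f0 f := rfl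

instance : AddCommGroup (X ⟶ Y) where
  add := (· + ·)
  zero := 0
  neg := Neg.neg
  add_assoc a b c := by ext <;> simp [add_assoc]
  zero_add a := by ext <;> simp
  add_zero a := by ext <;> simp
  add_comm a b := by ext <;> simp [add_comm]
  neg_add_cancel a := by ext <;> simp
  nsmul := nsmulRec
  zsmul := zsmulRec

@[simp] theorem sub_f1 (f g : X ⟶ Y) :
    TwoHom.f1 (f - g) = TwoHom.f1 f - TwoHom.f1 g := by
  show TwoHom.f1 (f + -g) = _
  rw [add_f1, neg_f1, sub_eq_add_neg]

@[simp] theorem sub_f0 (f g : X ⟶ Y) :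
    TwoHom.f0 (f - g) = TwoHom.f0 f - TwoHom.f0 g := by
  show TwoHom.f0 (f + -g) = _
  rw [add_f0, neg_f0, sub_eq_add_neg]

end HomGroup

instance : Preadditive (TwoCx R) where
  add_comp := by intros; ext <;> simp
  comp_add := by intros; ext <;> simp

def Homotopic {X Y : TwoCx R} (f g : X ⟶ Y) : Prop :=
  ∃ (h1 : X.X1 ⟶ Y.X0) (h0 : X.X0 ⟶ Y.X1),
    TwoHom.f1 f - TwoHom.f1 g = h1 ≫ Y.d0 + X.d1 ≫ h0 ∧
    TwoHom.f0 f - TwoHom.f0 g = h0 ≫ Y.d1 + X.d0 ≫ h1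

def Contractible (X : TwoCx R) : Prop := Homotopic (𝟙 X) (0 : X ⟶ X)

def IsHtpEquiv {X Y : TwoCx R} (f : X ⟶ Y) : Prop :=
  ∃ g : Y ⟶ X, Homotopic (f ≫ g) (𝟙 X) ∧ Homotopic (g ≫ f) (𝟙 Y)

def HtpEquiv (X Y : TwoCx R) : Prop := ∃ f : X ⟶ Y, IsHtpEquiv f

def modRad (M : ModuleCat.{u} R) : Submodule R M :=
  sInf {N : Submodule R M | IsCoatom N}

def RadicalCx (X : TwoCx R) : Prop :=
  LinearMap.range X.d1.hom ≤ modRad X.X0 ∧ LinearMap.range X.d0.hom ≤ modRad X.X1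

def dsum (X Y : TwoCx R) : TwoCx R where
  X1 := ModuleCat.of R (X.X1 × Y.X1)
  X0 := ModuleCat.of R (X.X0 × Y.X0)
  fin1 := by haveI := X.fin1; haveI := Y.fin1; exact (inferInstance : Module.Finite R (X.X1 × Y.X1))
  proj1 := by haveI := X.proj1; haveI := Y.proj1; exact (inferInstance : Module.Projective R (X.X1 × Y.X1))
  fin0 := by haveI := X.fin0; haveI := Y.fin0; exact (inferInstance : Module.Finite R (X.X0 × Y.X0))
  proj0 := by haveI := X.proj0; haveI := Y.proj0; exact (inferInstance : Module.Projective R (X.X0 × Y.X0))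
  d1 := ModuleCat.ofHom (LinearMap.prodMap X.d1.hom Y.d1.hom)
  d0 := ModuleCat.ofHom (LinearMap.prodMap X.d0.hom Y.d0.hom)
  dd1 := by
    have h1 : LinearMap.comp X.d0.hom X.d1.hom = 0 := congrArg ModuleCat.Hom.hom X.dd1
    have h2 : LinearMap.comp Y.d0.hom Y.d1.hom = 0 := congrArg ModuleCat.Hom.hom Y.dd1
    apply ModuleCat.hom_ext
    show LinearMap.comp (LinearMap.prodMap X.d0.hom Y.d0.hom) (LinearMap.prodMap X.d1.hom Y.d1.hom) = 0
    rw [LinearMap.prodMap_comp, h1, h2, LinearMap.prodMap_zero]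
  dd0 := by
    have h1 : LinearMap.comp X.d1.hom X.d0.hom = 0 := congrArg ModuleCat.Hom.hom X.dd0
    have h2 : LinearMap.comp Y.d1.hom Y.d0.hom = 0 := congrArg ModuleCat.Hom.hom Y.dd0
    apply ModuleCat.hom_ext
    show LinearMap.comp (LinearMap.prodMap X.d1.hom Y.d1.hom) (LinearMap.prodMap X.d0.hom Y.d0.hom) = 0
    rw [LinearMap.prodMap_comp, h1, h2, LinearMap.prodMap_zero]

def kP (P : ModuleCat.{u} R) (h1 : Module.Finite R P) (h2 : Module.Projective R P) : TwoCx R :=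
  ⟨P, P, h1, h2, h1, h2, 𝟙 P, 0, by simp, by simp⟩

def kS (P : ModuleCat.{u} R) (h1 : Module.Finite R P) (h2 : Module.Projective R P) : TwoCx R :=
  ⟨P, P, h1, h2, h1, h2, 0, 𝟙 P, by simp, by simp⟩

def starCx (X : TwoCx R) : TwoCx R :=
  ⟨X.X0, X.X1, X.fin0, X.proj0, X.fin1, X.proj1, -X.d0, -X.d1,
    by simp [X.dd0], by simp [X.dd1]⟩

-- ## The homotopy category
variable (R) in
def htpRel : HomRel (TwoCx R) := fun _ _ f g => Homotopic f g

abbrev KTwo (R : Type u) [Ring R] := CategoryTheory.Quotient (htpRel R)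

def KFun (R : Type u) [Ring R] : TwoCx R ⥤ KTwo R := Quotient.functor _

-- ## Short exact sequences
structure SESData (Y Z X : TwoCx R) where
  a : Y ⟶ Z
  b : Z ⟶ X
  inj1 : Function.Injective (TwoHom.f1 a)
  inj0 : Function.Injective (TwoHom.f0 a)
  surj1 : Function.Surjective (TwoHom.f1 b)
  surj0 : Function.Surjective (TwoHom.f0 b)
  exact1 : LinearMap.range (TwoHom.f1 a).hom = LinearMap.ker (TwoHom.f1 b).hom
  exact0 : LinearMap.range (TwoHom.f0 a).hom = LinearMap.ker (TwoHom.f0 b).hom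

def SESEquiv {Y X Z Z' : TwoCx R} (s : SESData Y Z X) (t : SESData Y Z' X) : Prop :=
  ∃ e : Z ≅ Z', s.a ≫ e.hom = t.a ∧ e.hom ≫ t.b = s.b

/-- The two components of a morphism `X ⟶ Y^*`, with their natural types. -/
def sf1 {X Y : TwoCx R} (f : X ⟶ starCx Y) : X.X1 →ₗ[R] Y.X0 := (TwoHom.f1 f).hom
def sf0 {X Y : TwoCx R} (f : X ⟶ starCx Y) : X.X0 →ₗ[R] Y.X1 := (TwoHom.f0 f).hom

-- ## The middle term associated to `f : X ⟶ Y^*`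
def coneCx {X Y : TwoCx R} (f : X ⟶ starCx Y) : TwoCx R where
  X1 := ModuleCat.of R (X.X1 × Y.X1)
  X0 := ModuleCat.of R (X.X0 × Y.X0)
  fin1 := by haveI := X.fin1; haveI := Y.fin1; exact (inferInstance : Module.Finite R (X.X1 × Y.X1))
  proj1 := by haveI := X.proj1; haveI := Y.proj1; exact (inferInstance : Module.Projective R (X.X1 × Y.X1))
  fin0 := by haveI := X.fin0; haveI := Y.fin0; exact (inferInstance : Module.Finite R (X.X0 × Y.X0))
  proj0 := by haveI := X.proj0; haveI := Y.proj0; exact (inferInstance : Module.Projective R (X.X0 × Y.X0))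
  d1 := ModuleCat.ofHom (LinearMap.prod (X.d1.hom ∘ₗ LinearMap.fst R X.X1 Y.X1)
    (Y.d1.hom ∘ₗ LinearMap.snd R X.X1 Y.X1 - sf1 f ∘ₗ LinearMap.fst R X.X1 Y.X1))
  d0 := ModuleCat.ofHom (LinearMap.prod (X.d0.hom ∘ₗ LinearMap.fst R X.X0 Y.X0)
    (Y.d0.hom ∘ₗ LinearMap.snd R X.X0 Y.X0 - sf0 f ∘ₗ LinearMap.fst R X.X0 Y.X0))
  dd1 := by
    refine ModuleCat.hom_ext (LinearMap.ext fun p => Prod.ext ?_ ?_)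
    · show X.d0 (X.d1 p.1) = 0
      exact LinearMap.congr_fun (congrArg ModuleCat.Hom.hom X.dd1) p.1
    · show Y.d0 (Y.d1 p.2 - sf1 f p.1) - sf0 f (X.d1 p.1) = 0
      have hY : Y.d0 (Y.d1 p.2) = 0 := LinearMap.congr_fun (congrArg ModuleCat.Hom.hom Y.dd1) p.2
      have hc : sf0 f (X.d1 p.1) = -(Y.d0 (sf1 f p.1)) := LinearMap.congr_fun (congrArg ModuleCat.Hom.hom f.comm1) p.1
      rw [map_sub, hY, hc]
      simp
  dd0 := by
    refine ModuleCat.hom_ext (LinearMap.ext fun p => Prod.ext ?_ ?_)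
    · show X.d1 (X.d0 p.1) = 0
      exact LinearMap.congr_fun (congrArg ModuleCat.Hom.hom X.dd0) p.1
    · show Y.d1 (Y.d0 p.2 - sf0 f p.1) - sf1 f (X.d0 p.1) = 0
      have hY : Y.d1 (Y.d0 p.2) = 0 := LinearMap.congr_fun (congrArg ModuleCat.Hom.hom Y.dd0) p.2
      have hc : sf1 f (X.d0 p.1) = -(Y.d1 (sf0 f p.1)) := LinearMap.congr_fun (congrArg ModuleCat.Hom.hom f.comm0) p.1
      rw [map_sub, hY, hc]
      simp

/-- The canonical inclusion `Y ⟶ Z_f`. -/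
def coneIn {X Y : TwoCx R} (f : X ⟶ starCx Y) : Y ⟶ coneCx f where
  f1 := ModuleCat.ofHom (LinearMap.inr R X.X1 Y.X1)
  f0 := ModuleCat.ofHom (LinearMap.inr R X.X0 Y.X0)
  comm1 := by
    refine ModuleCat.hom_ext (LinearMap.ext fun y => Prod.ext ?_ ?_)
    · show (0 : X.X0) = X.d1 0
      simp
    · show Y.d1 y = Y.d1 y - sf1 f 0
      simp
  comm0 := by
    refine ModuleCat.hom_ext (LinearMap.ext fun y => Prod.ext ?_ ?_)
    · show (0 : X.X1) = X.d0 0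
      simp
    · show Y.d0 y = Y.d0 y - sf0 f 0
      simp

/-- The canonical projection `Z_f ⟶ X`. -/
def coneOut {X Y : TwoCx R} (f : X ⟶ starCx Y) : coneCx f ⟶ X where
  f1 := ModuleCat.ofHom (LinearMap.fst R X.X1 Y.X1)
  f0 := ModuleCat.ofHom (LinearMap.fst R X.X0 Y.X0)
  comm1 := ModuleCat.hom_ext (LinearMap.ext fun _ => rfl)
  comm0 := ModuleCat.hom_ext (LinearMap.ext fun _ => rfl)

/-- The canonical short exact sequence `0 ⟶ Y ⟶ Z_f ⟶ X ⟶ 0`. -/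
def canonSES {X Y : TwoCx R} (f : X ⟶ starCx Y) : SESData Y (coneCx f) X where
  a := coneIn f
  b := coneOut f
  inj1 := LinearMap.inr_injective
  inj0 := LinearMap.inr_injective
  surj1 := LinearMap.fst_surjective
  surj0 := LinearMap.fst_surjective
  exact1 := LinearMap.range_inr R X.X1 Y.X1
  exact0 := LinearMap.range_inr R X.X0 Y.X0

-- ## scalar endomorphisms
def scalarMod [Algebra ℂ R] (c : ℂ) (M : ModuleCat.{u} R) : M ⟶ M :=
  ModuleCat.ofHom
  { toFun := fun m => algebraMap ℂ R c • m
    map_add' := fun x y => smul_add _ x y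
    map_smul' := fun r m => by
      simp only [RingHom.id_apply, smul_smul, Algebra.commutes] }

def scalarHom [Algebra ℂ R] (c : ℂ) (X : TwoCx R) : X ⟶ X where
  f1 := scalarMod c X.X1
  f0 := scalarMod c X.X0
  comm1 := by
    refine ModuleCat.hom_ext (LinearMap.ext fun x => ?_)
    exact (map_smul X.d1.hom (algebraMap ℂ R c) x).symm
  comm0 := by
    refine ModuleCat.hom_ext (LinearMap.ext fun x => ?_)
    exact (map_smul X.d0.hom (algebraMap ℂ R c) x).symm

end

/-!
A homotopy `f ∼ g` between radical complexes changes each component only by terms of the form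
`d ≫ h` or `h ≫ d`, so `f - g` takes values in the radical. Hence if `g ≫ f ∼ 𝟙` and
`f ≫ g ∼ 𝟙`, both composites are endomorphisms of finitely generated modules that are the
identity modulo the radical: by Nakayama they are surjective, and over the Noetherian ring `Aᵐᵒᵖ`
therefore bijective. So `f` has a left and a right inverse.
-/

section Radical

variable {R : Type u} [Ring R] {M : Type*} [AddCommGroup M] [Module R M]

theorem Submodule.eq_top_of_sup_jacobson_eq_top [Module.Finite R M] {N : Submodule R M}
    (h : N ⊔ Module.jacobson R M = ⊤) : N = ⊤ := by
  by_contra hN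
  obtain ⟨K, hK, hNK⟩ := (eq_top_or_exists_le_coatom N).resolve_left hN
  have hJK : Module.jacobson R M ≤ K := sInf_le hK
  exact hK.1 (top_le_iff.1 (h ▸ sup_le hNK hJK))

theorem LinearMap.surjective_of_sub_mem_jacobson [Module.Finite R M] (u : M →ₗ[R] M)
    (hu : ∀ m, u m - m ∈ Module.jacobson R M) : Function.Surjective u := by
  refine LinearMap.range_eq_top.1 (Submodule.eq_top_of_sup_jacobson_eq_top ?_)
  refine eq_top_iff.2 fun m _ => ?_
  rw [← sub_sub_cancel (u m) m]
  exact Submodule.sub_mem_sup (LinearMap.mem_range_self u m) (hu m)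

theorem LinearMap.bijective_of_sub_mem_jacobson [IsNoetherian R M] (u : M →ₗ[R] M)
    (hu : ∀ m, u m - m ∈ Module.jacobson R M) : Function.Bijective u :=
  have hsurj := u.surjective_of_sub_mem_jacobson hu
  ⟨IsNoetherian.injective_of_surjective_endomorphism u hsurj, hsurj⟩

end Radical

section TwoPeriodic

variable {R : Type u} [Ring R]

theorem Homotopic.refl {X Y : TwoCx R} (f : X ⟶ Y) : Homotopic f f :=
  ⟨0, 0, by simp, by simp⟩

section Homotopic

variable {X Y : TwoCx R} (hX : RadicalCx X) (hY : RadicalCx Y) {f g : X ⟶ Y}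
include hX hY

theorem Homotopic.sub_f1_mem_modRad (h : Homotopic f g) (x : X.X1) :
    TwoHom.f1 f x - TwoHom.f1 g x ∈ modRad Y.X1 := by
  obtain ⟨h1, h0, e1, -⟩ := h
  have hx : TwoHom.f1 f x - TwoHom.f1 g x = Y.d0 (h1 x) + h0 (X.d1 x) :=
    congr($e1 x)
  rw [hx]
  exact add_mem (hY.2 ⟨h1 x, rfl⟩)
    (Module.le_comap_jacobson h0.hom (hX.1 ⟨x, rfl⟩))

theorem Homotopic.sub_f0_mem_modRad (h : Homotopic f g) (x : X.X0) :
    TwoHom.f0 f x - TwoHom.f0 g x ∈ modRad Y.X0 := by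
  obtain ⟨h1, h0, -, e0⟩ := h
  have hx : TwoHom.f0 f x - TwoHom.f0 g x = Y.d1 (h0 x) + h1 (X.d0 x) :=
    congr($e0 x)
  rw [hx]
  exact add_mem (hY.1 ⟨h0 x, rfl⟩)
    (Module.le_comap_jacobson h1.hom (hX.2 ⟨x, rfl⟩))

end Homotopic

theorem isIso_of_isIso_f1_f0 {X Y : TwoCx R} (f : X ⟶ Y)
    [IsIso (TwoHom.f1 f)] [IsIso (TwoHom.f0 f)] : IsIso f := by
  refine ⟨⟨⟨inv (TwoHom.f1 f), inv (TwoHom.f0 f), ?_, ?_⟩, ?_, ?_⟩⟩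
  · rw [IsIso.eq_inv_comp, ← Category.assoc, ← f.comm1, Category.assoc, IsIso.hom_inv_id,
      Category.comp_id]
  · rw [IsIso.eq_inv_comp, ← Category.assoc, ← f.comm0, Category.assoc, IsIso.hom_inv_id,
      Category.comp_id]
  · ext <;> simp
  · ext <;> simp

theorem isIso_of_homotopic_id [IsNoetherianRing R] {Z : TwoCx R} (hZ : RadicalCx Z)
    (w : Z ⟶ Z) (hw : Homotopic w (𝟙 Z)) : IsIso w := by
  have := Z.fin1
  have := Z.fin0
  have h1 := (TwoHom.f1 w).hom.bijective_of_sub_mem_jacobson (hw.sub_f1_mem_modRad hZ hZ)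
  have h0 := (TwoHom.f0 w).hom.bijective_of_sub_mem_jacobson (hw.sub_f0_mem_modRad hZ hZ)
  have := (ConcreteCategory.isIso_iff_bijective (TwoHom.f1 w)).2 h1
  have := (ConcreteCategory.isIso_iff_bijective (TwoHom.f0 w)).2 h0
  exact isIso_of_isIso_f1_f0 w

end TwoPeriodic

theorem CategoryTheory.isIso_of_isIso_comp_of_isIso_comp {C : Type*} [Category C] {X Y : C}
    (f : X ⟶ Y) (g : Y ⟶ X) [IsIso (f ≫ g)] [IsIso (g ≫ f)] : IsIso f :=
  have : IsSplitMono f :=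
    IsSplitMono.mk' ⟨g ≫ inv (f ≫ g), by rw [← Category.assoc, IsIso.hom_inv_id]⟩
  have : Epi f := epi_of_epi g f
  isIso_of_epi_of_isSplitMono f

/-- For radical objects `X`, `Y` of `C₂(P)`, a morphism `f : X ⟶ Y` is an
isomorphism in `C₂(P)` iff it is a homotopy equivalence. -/
theorem statement_2 {A : Type u} [Ring A] [Algebra ℂ A] [FiniteDimensional ℂ A]
    {X Y : TwoCx Aᵐᵒᵖ} (hX : RadicalCx X) (hY : RadicalCx Y) (f : X ⟶ Y) :
    IsIso f ↔ IsHtpEquiv f := by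
  constructor
  · intro _
    exact ⟨inv f, by simpa using Homotopic.refl _, by simpa using Homotopic.refl _⟩
  · rintro ⟨g, hfg, hgf⟩
    have : IsNoetherianRing Aᵐᵒᵖ := IsNoetherianRing.of_finite ℂ Aᵐᵒᵖ
    have := isIso_of_homotopic_id hX (f ≫ g) hfg
    have := isIso_of_homotopic_id hY (g ≫ f) hgf
    exact isIso_of_isIso_comp_of_isIso_comp f g
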